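/- arXiv:1902.08689 — 2 statements merged into one kernel-verified Lean document; each statement's English description precedes it below -/
import Mathlib

section
/- If a graph G has a Hamiltonian path and minimum degree at least 3, then G has the strong parity property. -/
open SimpleGraph

/-- The degree of `v` in `H`, defined as the cardinality of its neighbor set. -/
noncomputable def edeg {V : Type*} (H : SimpleGraph V) (v : V) : ℕ := (H.neighborSet v).ncard

/-- A factor of `G`: a spanning subgraph with all degrees at least 1. -/
def IsFactor {V : Type*} (G H : SimpleGraph V) : Prop :=
  H ≤ G ∧ ∀ v, 1 ≤ edeg H v

/-- An `X`-parity-factor of `G`: a factor whose odd-degree vertices are exactly `X`. -/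
def IsParityFactor {V : Type*} (G H : SimpleGraph V) (X : Set V) : Prop :=
  IsFactor G H ∧ ∀ v, (Odd (edeg H v) ↔ v ∈ X)

/-- `G` has the strong parity property if every even-sized vertex subset
admits an `X`-parity-factor. -/
def StrongParity {V : Type*} (G : SimpleGraph V) : Prop :=
  ∀ X : Set V, Even X.ncard → ∃ H, IsParityFactor G H X

/-!
Let `Y` be the set of vertices at which the parity of the degree in `G` disagrees with membership
in `X`. Walking along the Hamiltonian path from its start, keep the edge towards the next vertex
exactly when an odd number of vertices of `Y` has been passed so far; the kept edges form a
subgraph `F` of maximum degree `2` whose odd-degree vertices agree with `Y` everywhere except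
possibly at the last vertex of the path. Deleting `F` from `G` then fixes every parity there, and
leaves a factor because `δ(G) ≥ 3`. At the last vertex the parity is forced as well: both the
odd-degree set of `G \ F` (handshake lemma) and `X` have even size.
-/

theorem Set.mem_of_mem_of_even_ncard {α : Type*} {A B : Set α} {v : α} (hA : A.Finite)
    (hAe : Even A.ncard) (hBe : Even B.ncard) (hAB : ∀ x ≠ v, x ∈ A ↔ x ∈ B) (hvA : v ∈ A) :
    v ∈ B := by
  by_contra hvB
  have hdiff : A \ {v} = B := by
    ext x
    by_cases hx : x = v
    · simp [hx, hvB]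
    · simp [hx, hAB x hx]
  have := Set.ncard_sdiff_singleton_add_one hvA hA
  rw [hdiff] at this
  grind

theorem Set.mem_iff_mem_of_even_ncard {α : Type*} [Finite α] {A B : Set α} {v : α}
    (hAe : Even A.ncard) (hBe : Even B.ncard) (hAB : ∀ x ≠ v, x ∈ A ↔ x ∈ B) :
    v ∈ A ↔ v ∈ B :=
  ⟨mem_of_mem_of_even_ncard A.toFinite hAe hBe hAB,
    mem_of_mem_of_even_ncard B.toFinite hBe hAe fun x hx => (hAB x hx).symm⟩

section

variable {V : Type*}

theorem edeg_eq_degree (H : SimpleGraph V) (v : V) [Fintype (H.neighborSet v)] :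
    edeg H v = H.degree v := by
  rw [edeg, ← Nat.card_coe_set_eq, Nat.card_eq_fintype_card, card_neighborSet_eq_degree]

theorem even_ncard_setOf_odd_edeg [Finite V] (H : SimpleGraph V) :
    Even {v | Odd (edeg H v)}.ncard := by
  classical
  have := Fintype.ofFinite V
  simpa [Set.ncard_eq_toFinset_card', edeg_eq_degree] using H.even_card_odd_degree_vertices

theorem edeg_sdiff [Finite V] {G F : SimpleGraph V} (hFG : F ≤ G) (v : V) :
    edeg (G \ F) v = edeg G v - edeg F v := by
  rw [edeg, neighborSet_sdiff, Set.ncard_sdiff (neighborSet_mono hFG v)]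
  rfl

theorem edeg_sup_edge [Finite V] [DecidableEq V] {F : SimpleGraph V} {u w : V}
    (hu : edeg F u = 0) (huw : u ≠ w) (x : V) :
    edeg (F ⊔ edge u w) x = edeg F x + if x = u ∨ x = w then 1 else 0 := by
  have hFu : ∀ y, ¬ F.Adj u y := by
    intro y hy
    rw [edeg, Set.ncard_eq_zero] at hu
    exact (Set.eq_empty_iff_forall_notMem.1 hu) y hy
  by_cases hxu : x = u
  · subst hxu
    have : (F ⊔ edge x w).neighborSet x = {w} := by
      ext y; simp [edge_adj, hFu y, huw]; grind
    rw [edeg, this, Set.ncard_singleton, if_pos (Or.inl rfl), hu]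
  by_cases hxw : x = w
  · subst hxw
    have : (F ⊔ edge u x).neighborSet x = insert u (F.neighborSet x) := by
      ext y; simp [edge_adj]; grind
    rw [edeg, this, Set.ncard_insert_of_notMem (fun h => hFu x h.symm), if_pos (Or.inr rfl)]
    rfl
  · have : (F ⊔ edge u w).neighborSet x = F.neighborSet x := by
      ext y; simp [edge_adj, hxu, hxw]
    rw [edeg, this, if_neg (by tauto)]
    rfl

theorem SimpleGraph.Walk.IsPath.exists_parity_subgraph [Finite V] {G : SimpleGraph V} {u v : V}
    {p : G.Walk u v} (hp : p.IsPath) (T : Set V) :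
    ∃ F ≤ G, edeg F u ≤ 1 ∧ (∀ x, edeg F x ≤ 2) ∧ (∀ x ∉ p.support, edeg F x = 0) ∧
      ∀ x ∈ p.support, x ≠ v → (Odd (edeg F x) ↔ x ∈ T) := by
  classical
  induction p generalizing T with
  | nil =>
    refine ⟨⊥, bot_le, ?_, ?_, ?_, ?_⟩ <;> simp [edeg]
  | @cons u w v h q ih =>
    obtain ⟨hq, huq⟩ := (cons_isPath_iff h q).1 hp
    by_cases huT : u ∈ T
    · -- the edge `uw` makes the degree of `u` odd and flips the parity at `w`
      obtain ⟨F, hFG, hFw, hF2, hF0, hFT⟩ := ih hq (symmDiff T {w})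
      have hdeg := edeg_sup_edge (hF0 u huq) h.ne
      refine ⟨F ⊔ edge u w, sup_le hFG ((edge_le_iff _).2 (Or.inr h)), ?_, ?_, ?_, ?_⟩
      · simp [hdeg, hF0 u huq]
      · intro x
        rw [hdeg]
        split_ifs with hx
        · rcases hx with rfl | rfl
          · simp [hF0 x huq]
          · omega
        · exact hF2 x
      · intro x hx
        simp only [support_cons, List.mem_cons, not_or] at hx
        rw [hdeg, hF0 x hx.2, if_neg (by rintro (h | h) <;> simp_all)]
      · intro x hx hxv
        rcases List.mem_cons.1 hx with rfl | hx
        · simp [hdeg, hF0 x huq, huT]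
        · have hxu : x ≠ u := fun hxu => huq (hxu ▸ hx)
          have := hFT x hx hxv
          rw [hdeg]
          by_cases hxw : x = w
          · simp_all [Nat.odd_add_one, Set.mem_symmDiff]
          · simp_all [Set.mem_symmDiff]
    · obtain ⟨F, hFG, -, hF2, hF0, hFT⟩ := ih hq T
      refine ⟨F, hFG, by simp [hF0 u huq], hF2, ?_, ?_⟩
      · intro x hx
        exact hF0 x (fun h => hx (List.mem_cons_of_mem _ h))
      · intro x hx hxv
        rcases List.mem_cons.1 hx with rfl | hx
        · simp [hF0 x huq, huT]
        · exact hFT x hx hxv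

end

theorem hamiltonian_path_min_degree_three_strong_parity {V : Type*} [Fintype V]
    [DecidableEq V] (G : SimpleGraph V)
    (hham : ∃ (u v : V) (p : G.Walk u v), p.IsHamiltonian)
    (hδ : ∀ v, 3 ≤ edeg G v) :
    StrongParity G := by
  intro X hX
  obtain ⟨u, v, p, hp⟩ := hham
  obtain ⟨F, hFG, -, hF2, -, hFT⟩ :=
    hp.isPath.exists_parity_subgraph {x | ¬(Odd (edeg G x) ↔ x ∈ X)}
  have hdeg (x : V) : edeg (G \ F) x = edeg G x - edeg F x := edeg_sdiff hFG x
  have hodd (x : V) (hxv : x ≠ v) : Odd (edeg (G \ F) x) ↔ x ∈ X := by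
    have := hFT x (hp.mem_support x) hxv
    rw [hdeg, Nat.odd_sub ((hF2 x).trans (by linarith [hδ x])), ← Nat.not_odd_iff_even]
    simp only [Set.mem_ofPred_eq] at this
    tauto
  have hfactor (x : V) : 1 ≤ edeg (G \ F) x := by
    rw [hdeg]
    have := hF2 x
    have := hδ x
    omega
  refine ⟨G \ F, ⟨sdiff_le, hfactor⟩, fun x => ?_⟩
  rcases eq_or_ne x v with rfl | hxv
  · exact Set.mem_iff_mem_of_even_ncard (A := {y | Odd (edeg (G \ F) y)})
      (even_ncard_setOf_odd_edeg _) hX hodd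
  · exact hodd x hxv
end

section
/- If every vertex of a connected multigraph G is incident with a cycle of length 2 or 3 (i.e., with a pair of parallel edges or a triangle), then G has the strong parity property. -/
open SimpleGraph

/-!
Degree parities add under symmetric difference of edge sets. Pairing up the vertices of `X` and
taking the symmetric difference of paths joining the pairs gives a subgraph `J ≤ G` whose
odd-degree vertices are exactly `X`. While `J` has an isolated vertex `v`, replace `J` by `J ∆ T`
for a triangle `T` through `v`. A triangle has even degrees, so the parities are kept; since `v`
was isolated, the triangle edges at `v` survive in `J ∆ T`, so `v` and its two triangle neighbours
are not isolated there, while all other vertices keep their neighbourhoods. Hence the set of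
isolated vertices strictly shrinks.
-/

open scoped symmDiff

namespace Set

variable {α : Type*} {s t : Set α}

theorem ncard_symmDiff_add_two_mul_ncard_inter (hs : s.Finite := by toFinite_tac)
    (ht : t.Finite := by toFinite_tac) :
    (s ∆ t).ncard + 2 * (s ∩ t).ncard = s.ncard + t.ncard := by
  have hunion : s ∪ t = s ∆ t ∪ s ∩ t := (symmDiff_sup_inf s t).symm
  have hdisj : Disjoint (s ∆ t) (s ∩ t) := disjoint_symmDiff_inf s t
  rw [← ncard_union_add_ncard_inter s t hs ht, hunion,
    ncard_union_eq hdisj ((hs.union ht).subset symmDiff_le_sup) (hs.inter_of_left t)]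
  ring

theorem odd_ncard_symmDiff_iff (hs : s.Finite := by toFinite_tac)
    (ht : t.Finite := by toFinite_tac) :
    Odd (s ∆ t).ncard ↔ Xor (Odd s.ncard) (Odd t.ncard) := by
  have := ncard_symmDiff_add_two_mul_ncard_inter hs ht
  rw [xor_iff_not_iff]
  grind

end Set

namespace SimpleGraph

variable {V : Type*} {G : SimpleGraph V}

theorem symmDiff_adj (A B : SimpleGraph V) (a b : V) :
    (A ∆ B).Adj a b ↔ Xor (A.Adj a b) (B.Adj a b) := Iff.rfl

def oddVerts (H : SimpleGraph V) : Set V := {v | Odd (edeg H v)}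

theorem oddVerts_symmDiff [Finite V] (A B : SimpleGraph V) :
    oddVerts (A ∆ B) = oddVerts A ∆ oddVerts B := by
  ext v
  exact Set.odd_ncard_symmDiff_iff

@[simp] theorem oddVerts_bot : oddVerts (⊥ : SimpleGraph V) = ∅ := by
  ext v
  simp [oddVerts, edeg]

theorem edeg_eq_zero_iff [Finite V] {H : SimpleGraph V} {v : V} :
    edeg H v = 0 ↔ ∀ w, ¬ H.Adj v w := by
  rw [edeg, Set.ncard_eq_zero, Set.eq_empty_iff_forall_notMem]
  rfl

namespace Walk

theorem IsTrail.edeg_spanningCoe_toSubgraph [DecidableEq V] {u v : V} {p : G.Walk u v}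
    (hp : p.IsTrail) (a : V) :
    edeg p.toSubgraph.spanningCoe a = p.edges.countP (a ∈ ·) := by
  have hinc : p.toSubgraph.spanningCoe.incidenceSet a = ↑(p.edges.filter (a ∈ ·)).toFinset := by
    ext e
    simp [incidenceSet, and_comm]
  rw [edeg, ← Set.ncard_congr' (incidenceSetEquivNeighborSet _ a), hinc, Set.ncard_coe_finset,
    List.toFinset_card_of_nodup (hp.edges_nodup.filter _), List.countP_eq_length_filter]

theorem IsTrail.oddVerts_spanningCoe_toSubgraph {u v : V} {p : G.Walk u v} (hp : p.IsTrail)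
    (huv : u ≠ v) : oddVerts p.toSubgraph.spanningCoe = {u, v} := by
  classical
  ext a
  simp only [oddVerts, Set.mem_ofPred_eq, hp.edeg_spanningCoe_toSubgraph, ← Nat.not_even_iff_odd,
    hp.even_countP_edges_iff, Set.mem_insert_iff, Set.mem_singleton_iff]
  tauto

theorem IsTrail.oddVerts_spanningCoe_toSubgraph_eq_empty {u : V} {p : G.Walk u u}
    (hp : p.IsTrail) : oddVerts p.toSubgraph.spanningCoe = ∅ := by
  classical
  ext a
  simp [oddVerts, hp.edeg_spanningCoe_toSubgraph, ← Nat.not_even_iff_odd, hp.even_countP_edges_iff]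

end Walk

theorem Preconnected.exists_le_oddVerts_eq [Finite V] (hG : G.Preconnected) {X : Set V}
    (hX : Even X.ncard) : ∃ J ≤ G, oddVerts J = X := by
  obtain ⟨k, hk⟩ := hX
  induction k generalizing X with
  | zero => exact ⟨⊥, bot_le, by simp_all [Set.ncard_eq_zero (Set.toFinite X)]⟩
  | succ k ih =>
    obtain ⟨t, htX, ht⟩ := Set.exists_subset_card_eq (show 2 ≤ X.ncard by omega)
    obtain ⟨x, y, hxy, rfl⟩ := Set.ncard_eq_two.mp ht
    obtain ⟨J, hJG, hJ⟩ := ih (X := X \ {x, y}) (by rw [Set.ncard_sdiff htX, ht]; omega)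
    obtain ⟨p, hp⟩ := (hG x y).exists_isPath
    refine ⟨J ∆ p.toSubgraph.spanningCoe,
      symmDiff_le_sup.trans (sup_le hJG (Subgraph.spanningCoe_le _)), ?_⟩
    rw [oddVerts_symmDiff, hJ, hp.isTrail.oddVerts_spanningCoe_toSubgraph hxy,
      Disjoint.symmDiff_eq_sup disjoint_sdiff_self_left, sdiff_sup_cancel htX]

theorem setOf_edeg_symmDiff_eq_zero_ssubset [Finite V] {J T : SimpleGraph V} {v : V}
    (hJv : edeg J v = 0) (hTv : ∃ w, T.Adj v w) (hT : ∀ a b, T.Adj a b → a = v ∨ T.Adj a v) :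
    {a | edeg (J ∆ T) a = 0} ⊂ {a | edeg J a = 0} := by
  simp only [Set.ssubset_def, Set.subset_def, Set.mem_ofPred_eq, edeg_eq_zero_iff] at hJv ⊢
  refine ⟨fun a ha b hJab => ?_, fun h => ?_⟩
  · have hTab : T.Adj a b := by simpa [symmDiff_adj, xor_def, hJab] using ha b
    rcases hT a b hTab with rfl | hTav
    · exact hJv b hJab
    · exact ha v ((symmDiff_adj J T a v).2 (Or.inr ⟨hTav, fun hJav => hJv a hJav.symm⟩))
  · obtain ⟨w, hTvw⟩ := hTv
    exact h v hJv w ((symmDiff_adj J T v w).2 (Or.inr ⟨hTvw, hJv w⟩))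

theorem exists_even_subgraph_dominated_of_triangle {u v w : V} (hvu : G.Adj v u)
    (hvw : G.Adj v w) (huw : G.Adj u w) :
    ∃ T ≤ G, oddVerts T = ∅ ∧ (∃ b, T.Adj v b) ∧ ∀ a b, T.Adj a b → a = v ∨ T.Adj a v := by
  let c : G.Walk v v := .cons hvu (.cons huw (.cons hvw.symm .nil))
  have hc : c.IsTrail := by simp [c, hvu.ne, hvu.ne', hvw.ne, huw.ne]
  refine ⟨c.toSubgraph.spanningCoe, Subgraph.spanningCoe_le _,
    hc.oddVerts_spanningCoe_toSubgraph_eq_empty, ⟨u, by simp [c, hvu.ne]⟩, fun a b hab => ?_⟩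
  simp only [c, Subgraph.spanningCoe_adj, Walk.adj_toSubgraph_iff_mem_edges, Walk.edges_cons,
    Walk.edges_nil, List.mem_cons, List.not_mem_nil, Sym2.eq_iff, or_false] at hab ⊢
  grind

theorem exists_isFactor_oddVerts_eq [Finite V]
    (htri : ∀ v : V, ∃ u w : V, G.Adj v u ∧ G.Adj v w ∧ G.Adj u w) {J : SimpleGraph V}
    (hJ : J ≤ G) : ∃ H, IsFactor G H ∧ oddVerts H = oddVerts J := by
  induction hn : {a | edeg J a = 0}.ncard using Nat.strong_induction_on generalizing J with
  | _ n ih =>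
  by_cases hiso : ∃ v, edeg J v = 0
  · obtain ⟨v, hv⟩ := hiso
    obtain ⟨u, w, hvu, hvw, huw⟩ := htri v
    obtain ⟨T, hTG, hT, hTv, hTdom⟩ := exists_even_subgraph_dominated_of_triangle hvu hvw huw
    obtain ⟨H, hH, hHJ⟩ := ih _ (hn ▸ Set.ncard_lt_ncard
      (setOf_edeg_symmDiff_eq_zero_ssubset hv hTv hTdom))
      (symmDiff_le_sup.trans (sup_le hJ hTG)) rfl
    exact ⟨H, hH, by rw [hHJ, oddVerts_symmDiff, hT, ← Set.bot_eq_empty, symmDiff_bot]⟩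
  · push Not at hiso
    exact ⟨J, ⟨hJ, fun v => Nat.one_le_iff_ne_zero.mpr (hiso v)⟩, rfl⟩

end SimpleGraph

theorem every_vertex_on_triangle_strong_parity {V : Type*} [Fintype V]
    (G : SimpleGraph V) (hG : G.Connected)
    (htri : ∀ v : V, ∃ u w : V, G.Adj v u ∧ G.Adj v w ∧ G.Adj u w) :
    StrongParity G := by
  intro X hX
  obtain ⟨J, hJG, hJX⟩ := hG.preconnected.exists_le_oddVerts_eq hX
  obtain ⟨H, hH, hHJ⟩ := exists_isFactor_oddVerts_eq htri hJG
  exact ⟨H, hH, fun v => by rw [← hJX, ← hHJ]; rfl⟩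
end
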